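/- arXiv:2503.00381 — 5 statements merged into one kernel-verified Lean document; each statement's English description precedes it below -/
import Mathlib

section
/- Fix c > 0 and d > (27c)^{1/4}/4. Then the quartic polynomial Q(u) = 16·d·u³ − 9·u⁴ − c has exactly two positive real roots 0 < u₁ < u₂, and Q(u) > 0 for u ∈ (u₁, u₂). -/
/-! `Q u = 16 d u³ - 9 u⁴ - c` has `Q' u = 12 u² (4d - 3u)`, so on `[0, ∞)` it increases up to
its maximum at `u = 4d/3` and decreases afterwards. Since `Q 0 = Q (16d/9) = -c < 0` and the
maximum `Q (4d/3) = 256 d⁴/27 - c` is positive exactly when `d > (27c)^{1/4}/4`, the intermediate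
value theorem gives one zero on each side of `4d/3`, strict monotonicity makes them the only
positive zeros, and `Q` is positive between them. -/

open Set

section Unimodal

variable {f : ℝ → ℝ} {a m b : ℝ}

theorem exists_two_zeros_of_strictMonoOn_of_strictAntiOn (ham : a ≤ m) (hmb : m ≤ b)
    (hf : ContinuousOn f (Icc a b)) (hmono : StrictMonoOn f (Icc a m))
    (hanti : StrictAntiOn f (Ici m)) (ha : f a < 0) (hm : 0 < f m) (hb : f b < 0) :
    ∃ u₁ u₂ : ℝ, a < u₁ ∧ u₁ < u₂ ∧ f u₁ = 0 ∧ f u₂ = 0 ∧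
      (∀ u : ℝ, a < u → f u = 0 → u = u₁ ∨ u = u₂) ∧
      (∀ u ∈ Ioo u₁ u₂, 0 < f u) := by
  obtain ⟨u₁, ⟨hau₁, hu₁m⟩, hu₁⟩ : (0 : ℝ) ∈ f '' Ioo a m :=
    intermediate_value_Ioo ham (hf.mono (Icc_subset_Icc_right hmb)) ⟨ha, hm⟩
  obtain ⟨u₂, ⟨hmu₂, -⟩, hu₂⟩ : (0 : ℝ) ∈ f '' Ioo m b :=
    intermediate_value_Ioo' hmb (hf.mono (Icc_subset_Icc_left ham)) ⟨hb, hm⟩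
  have hu₁_mem : u₁ ∈ Icc a m := ⟨hau₁.le, hu₁m.le⟩
  have hu₂_mem : u₂ ∈ Ici m := hmu₂.le
  refine ⟨u₁, u₂, hau₁, hu₁m.trans hmu₂, hu₁, hu₂, fun u hau hu => ?_,
    fun u hu => ?_⟩
  · rcases le_or_gt u m with hum | hmu
    · exact .inl (hmono.injOn ⟨hau.le, hum⟩ hu₁_mem (hu.trans hu₁.symm))
    · exact .inr (hanti.injOn hmu.le hu₂_mem (hu.trans hu₂.symm))
  · rcases le_or_gt u m with hum | hmu
    · exact hu₁ ▸ hmono hu₁_mem ⟨hau₁.le.trans hu.1.le, hum⟩ hu.1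
    · exact hu₂ ▸ hanti hmu.le hu₂_mem hu.2

end Unimodal

section Quartic

variable (c d : ℝ)

theorem hasDerivAt_quartic (x : ℝ) :
    HasDerivAt (fun u => 16 * d * u ^ 3 - 9 * u ^ 4 - c) (12 * x ^ 2 * (4 * d - 3 * x)) x := by
  refine ((((hasDerivAt_pow 3 x).const_mul (16 * d)).sub
    ((hasDerivAt_pow 4 x).const_mul 9)).sub_const c).congr_deriv (by norm_num; ring)

theorem continuous_quartic : Continuous fun u : ℝ => 16 * d * u ^ 3 - 9 * u ^ 4 - c := by
  fun_prop

theorem strictMonoOn_quartic :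
    StrictMonoOn (fun u => 16 * d * u ^ 3 - 9 * u ^ 4 - c) (Icc 0 (4 * d / 3)) := by
  refine strictMonoOn_of_deriv_pos (convex_Icc _ _) (continuous_quartic c d).continuousOn
    fun x hx => ?_
  rw [interior_Icc] at hx
  rw [(hasDerivAt_quartic c d x).deriv]
  have : 0 < 4 * d - 3 * x := by linarith [hx.2]
  have : 0 < x := hx.1
  positivity

theorem strictAntiOn_quartic {d : ℝ} (hd : 0 ≤ d) :
    StrictAntiOn (fun u => 16 * d * u ^ 3 - 9 * u ^ 4 - c) (Ici (4 * d / 3)) := by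
  refine strictAntiOn_of_deriv_neg (convex_Ici _) (continuous_quartic c d).continuousOn
    fun x hx => ?_
  rw [interior_Ici] at hx
  rw [(hasDerivAt_quartic c d x).deriv]
  have hx0 : 0 < x := lt_of_le_of_lt (by positivity) hx
  have : 4 * d - 3 * x < 0 := by linarith [mem_Ioi.mp hx]
  exact mul_neg_of_pos_of_neg (by positivity) this

theorem quartic_at_critical_point :
    16 * d * (4 * d / 3) ^ 3 - 9 * (4 * d / 3) ^ 4 - c = 256 * d ^ 4 / 27 - c := by
  ring

end Quartic

theorem lt_pow_four_of_rpow_quarter_lt {x y : ℝ} (hx : 0 ≤ x) (h : x ^ ((1 : ℝ) / 4) < y) :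
    x < y ^ 4 := by
  have hy : 0 ≤ y := (Real.rpow_nonneg hx _).trans h.le
  rw [one_div, Real.rpow_inv_lt_iff_of_pos hx hy four_pos] at h
  exact_mod_cast h

/-- For `c > 0` and `d > (27c)^{1/4}/4`, the quartic `Q(u) = 16·d·u³ − 9·u⁴ − c` has
exactly two positive real roots `0 < u₁ < u₂`, and `Q(u) > 0` on `(u₁, u₂)`. -/
theorem quartic_two_positive_roots (c d : ℝ) (hc : 0 < c)
    (hd : (27 * c) ^ ((1 : ℝ) / 4) / 4 < d) :
    ∃ u₁ u₂ : ℝ, 0 < u₁ ∧ u₁ < u₂ ∧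
      16 * d * u₁ ^ 3 - 9 * u₁ ^ 4 - c = 0 ∧
      16 * d * u₂ ^ 3 - 9 * u₂ ^ 4 - c = 0 ∧
      (∀ u : ℝ, 0 < u → 16 * d * u ^ 3 - 9 * u ^ 4 - c = 0 → u = u₁ ∨ u = u₂) ∧
      (∀ u ∈ Set.Ioo u₁ u₂, 0 < 16 * d * u ^ 3 - 9 * u ^ 4 - c) := by
  have hd0 : 0 < d := lt_of_le_of_lt (by positivity) hd
  have hdisc : 27 * c < 256 * d ^ 4 := by
    have h4 : (27 * c) ^ ((1 : ℝ) / 4) < 4 * d := by linarith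
    linarith [lt_pow_four_of_rpow_quarter_lt (by positivity) h4]
  refine exists_two_zeros_of_strictMonoOn_of_strictAntiOn (m := 4 * d / 3) (b := 16 * d / 9)
    (by positivity) (by linarith) (continuous_quartic c d).continuousOn
    (strictMonoOn_quartic c d) (strictAntiOn_quartic c hd0.le) ?_ ?_ ?_
  · norm_num [hc]
  · rw [quartic_at_critical_point]
    linarith
  · ring_nf
    linarith
end

section
/- Fix c ≤ 0 and d ∈ ℝ. Then the polynomial Q(u) = 16·d·u³ − 9·u⁴ − c has at most one positive real root, and the set {u > 0 : Q(u) > 0} is not a bounded interval with both endpoints roots of Q (in particular the algebraic curve y² = (x²/9)·Q(x²) restricted to x > 0 is not a closed curve). -/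
/-- For `c ≤ 0` and any `d`, the polynomial `Q(u) = 16·d·u³ − 9·u⁴ − c` has at most one
positive real root, and the set `{u > 0 : Q(u) > 0}` is not a bounded open interval with
both endpoints positive roots of `Q` (so the algebraic curve `y² = (x²/9)Q(x²)`, `x > 0`,
is not closed). -/
theorem quartic_not_closed_of_c_nonpos (c d : ℝ) (hc : c ≤ 0) :
    (∀ u v : ℝ, 0 < u → 0 < v →
        16 * d * u ^ 3 - 9 * u ^ 4 - c = 0 → 16 * d * v ^ 3 - 9 * v ^ 4 - c = 0 → u = v) ∧
      ¬ ∃ a b : ℝ, 0 < a ∧ a < b ∧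
          16 * d * a ^ 3 - 9 * a ^ 4 - c = 0 ∧ 16 * d * b ^ 3 - 9 * b ^ 4 - c = 0 ∧
          {u : ℝ | 0 < u ∧ 0 < 16 * d * u ^ 3 - 9 * u ^ 4 - c} = Set.Ioo a b := by
  have key : ∀ u v : ℝ, 0 < u → 0 < v →
      16 * d * u ^ 3 - 9 * u ^ 4 - c = 0 → 16 * d * v ^ 3 - 9 * v ^ 4 - c = 0 → u = v := by
    intro u v hu hv h1 h2
    have hdu : 16 * d ≤ 9 * u := by
      nlinarith [pow_pos hu 3]
    have hdv : 16 * d ≤ 9 * v := by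
      nlinarith [pow_pos hv 3]
    by_contra hne
    rcases lt_or_gt_of_ne hne with h | h
    · have hcube : u ^ 3 ≤ v ^ 3 := pow_le_pow_left₀ hu.le h.le 3
      have h3 : 0 ≤ (9 * u - 16 * d) * (v ^ 3 - u ^ 3) :=
        mul_nonneg (by linarith) (by linarith)
      have h4 : u * v ^ 3 < v * v ^ 3 := by
        exact mul_lt_mul_of_pos_right h (pow_pos hv 3)
      nlinarith [h3, h4]
    · have hcube : v ^ 3 ≤ u ^ 3 := pow_le_pow_left₀ hv.le h.le 3
      have h3 : 0 ≤ (9 * v - 16 * d) * (u ^ 3 - v ^ 3) :=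
        mul_nonneg (by linarith) (by linarith)
      have h4 : v * u ^ 3 < u * u ^ 3 := by
        exact mul_lt_mul_of_pos_right h (pow_pos hu 3)
      nlinarith [h3, h4]
  refine ⟨key, ?_⟩
  rintro ⟨a, b, ha, hab, h1, h2, -⟩
  exact absurd (key a b ha (ha.trans hab) h1 h2) hab.ne
end

section
/- Let κ : I → ℝ be a positive smooth function satisfying κ^{3/4}·(d²/ds²)(κ^{−3/4}) − 3κ² + c = 0. Then E(s) = (9 κ_s²/(16 κ²) + 9κ² + c)/(16 κ^{3/2}) is a first integral of the ODE, i.e., there is a constant d with (9/16)·κ_s²/κ² + 9·κ² + c − 16·d·κ^{3/2} = 0. -/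
/-- If a positive smooth `κ` satisfies the Euler–Lagrange equation
`κ^{3/4}·(κ^{−3/4})'' − 3κ² + c = 0` of the bending energy `∫ κ^{1/4} ds`, then
`E(s) = (9 κ_s²/(16 κ²) + 9κ² + c)/(16 κ^{3/2})` is a first integral of the ODE,
i.e. its derivative vanishes identically (so the constant `d` in the prime integral
`κ_s² = (16/9)κ²(16 d κ^{3/2} − 9κ² − c)` is indeed constant). -/
theorem bending_energy_prime_integral (c : ℝ) (κ : ℝ → ℝ)
    (hκ : ContDiff ℝ (⊤ : ℕ∞) κ) (hpos : ∀ s, 0 < κ s)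
    (hODE : ∀ s,
      (κ s) ^ ((3 : ℝ) / 4) * deriv (deriv fun r => (κ r) ^ (-(3 : ℝ) / 4)) s
        - 3 * (κ s) ^ 2 + c = 0) :
    ∀ s, deriv (fun t =>
      (9 * (deriv κ t) ^ 2 / (16 * (κ t) ^ 2) + 9 * (κ t) ^ 2 + c)
        / (16 * (κ t) ^ ((3 : ℝ) / 2))) s = 0 := by
  intro s
  have hdiff : Differentiable ℝ κ := hκ.differentiable (by simp)
  have hkinf : ContDiff ℝ ((⊤ : ℕ∞) : WithTop ℕ∞) κ := hκ.of_le (by simp)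
  have hdiff2 : Differentiable ℝ (deriv κ) :=
    ((hkinf.iterate_deriv 1).differentiable (by simp))
  set k := κ s with hkdef
  set u := deriv κ s with hudef
  set u2 := deriv (deriv κ) s with hu2def
  have hkpos : 0 < k := hpos s
  have hkne : k ≠ 0 := hkpos.ne'
  have hκ' : HasDerivAt κ u s := (hdiff s).hasDerivAt
  have hκ'' : HasDerivAt (deriv κ) u2 s := (hdiff2 s).hasDerivAt
  -- first derivative of κ ^ (-3/4)
  have h1 : (deriv fun r => (κ r) ^ (-(3 : ℝ) / 4))
      = fun t => deriv κ t * (-(3 : ℝ) / 4) * κ t ^ (-(3 : ℝ) / 4 - 1) := by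
    funext t
    exact ((hdiff t).hasDerivAt.rpow_const (Or.inl (hpos t).ne')).deriv
  -- second derivative at s
  have h2 : deriv (deriv fun r => (κ r) ^ (-(3 : ℝ) / 4)) s
      = u2 * (-(3 : ℝ) / 4) * k ^ (-(3 : ℝ) / 4 - 1)
        + u * (-(3 : ℝ) / 4) * (u * (-(3 : ℝ) / 4 - 1) * k ^ (-(3 : ℝ) / 4 - 1 - 1)) := by
    rw [h1]
    have ha : HasDerivAt (fun t => deriv κ t * (-(3 : ℝ) / 4)) (u2 * (-(3 : ℝ) / 4)) s :=
      hκ''.mul_const _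
    have hb : HasDerivAt (fun t => κ t ^ (-(3 : ℝ) / 4 - 1))
        (u * (-(3 : ℝ) / 4 - 1) * k ^ (-(3 : ℝ) / 4 - 1 - 1)) s :=
      hκ'.rpow_const (Or.inl hkne)
    have := (ha.mul hb).deriv
    exact this
  -- simplify rpow products
  have e1 : k ^ ((3 : ℝ) / 4) * k ^ (-(3 : ℝ) / 4 - 1) = k⁻¹ := by
    rw [← Real.rpow_add hkpos, show (3:ℝ)/4 + (-(3:ℝ)/4 - 1) = -1 by norm_num,
      Real.rpow_neg_one]
  have e2 : k ^ ((3 : ℝ) / 4) * k ^ (-(3 : ℝ) / 4 - 1 - 1) = (k ^ 2)⁻¹ := by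
    rw [← Real.rpow_add hkpos]
    have : (3 : ℝ) / 4 + (-(3 : ℝ) / 4 - 1 - 1) = -2 := by norm_num
    rw [this, Real.rpow_neg hkpos.le, show ((2:ℝ) = ((2:ℕ):ℝ)) by norm_num,
      Real.rpow_natCast]
  -- solve the ODE for u2
  have hODEs := hODE s
  rw [h2] at hODEs
  have hu2eq : u2 = 7 / 4 * u ^ 2 / k - 4 * k ^ 3 + 4 / 3 * c * k := by
    have expand : k ^ ((3 : ℝ) / 4)
          * (u2 * (-(3 : ℝ) / 4) * k ^ (-(3 : ℝ) / 4 - 1)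
            + u * (-(3 : ℝ) / 4) * (u * (-(3 : ℝ) / 4 - 1) * k ^ (-(3 : ℝ) / 4 - 1 - 1)))
        = u2 * (-(3 : ℝ) / 4) * k⁻¹ + u * (-(3 : ℝ) / 4) * (u * (-(3 : ℝ) / 4 - 1)) * (k ^ 2)⁻¹ := by
      rw [mul_add]
      rw [show k ^ ((3:ℝ)/4) * (u2 * (-(3:ℝ)/4) * k ^ (-(3:ℝ)/4 - 1))
          = u2 * (-(3:ℝ)/4) * (k ^ ((3:ℝ)/4) * k ^ (-(3:ℝ)/4 - 1)) by ring,
        show k ^ ((3:ℝ)/4) * (u * (-(3:ℝ)/4) * (u * (-(3:ℝ)/4 - 1) * k ^ (-(3:ℝ)/4 - 1 - 1)))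
          = u * (-(3:ℝ)/4) * (u * (-(3:ℝ)/4 - 1)) * (k ^ ((3:ℝ)/4) * k ^ (-(3:ℝ)/4 - 1 - 1)) by ring,
        e1, e2]
    rw [expand] at hODEs
    field_simp at hODEs ⊢
    nlinarith [hODEs, sq_nonneg k, hkpos]
  -- set up the derivative of E
  have hNtop : HasDerivAt (fun t => 9 * (deriv κ t) ^ 2) (9 * (2 * u * u2)) s := by
    have : HasDerivAt (fun t => 9 * (deriv κ t) ^ 2) (9 * (((2:ℕ):ℝ) * u ^ (2 - 1) * u2)) s :=
      by simpa using (hκ''.pow 2).const_mul (9 : ℝ)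
    convert this using 1
    push_cast
    ring
  have hNbot : HasDerivAt (fun t => 16 * (κ t) ^ 2) (16 * (2 * k * u)) s := by
    have : HasDerivAt (fun t => 16 * (κ t) ^ 2) (16 * (((2:ℕ):ℝ) * k ^ (2 - 1) * u)) s :=
      by simpa using (hκ'.pow 2).const_mul (16 : ℝ)
    convert this using 1
    push_cast
    ring
  have hbotne : (16 : ℝ) * k ^ 2 ≠ 0 := by positivity
  have hN : HasDerivAt
      (fun t => 9 * (deriv κ t) ^ 2 / (16 * (κ t) ^ 2) + 9 * (κ t) ^ 2 + c)
      ((9 * (2 * u * u2) * (16 * k ^ 2) - 9 * u ^ 2 * (16 * (2 * k * u))) / (16 * k ^ 2) ^ 2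
        + 9 * (2 * k * u)) s := by
    have hdivN := hNtop.div hNbot hbotne
    have hsq : HasDerivAt (fun t => 9 * (κ t) ^ 2) (9 * (2 * k * u)) s := by
      have : HasDerivAt (fun t => 9 * (κ t) ^ 2) (9 * (((2:ℕ):ℝ) * k ^ (2 - 1) * u)) s :=
        by simpa using (hκ'.pow 2).const_mul (9 : ℝ)
      convert this using 1
      push_cast
      ring
    exact (hdivN.add hsq).add_const c
  have hg : HasDerivAt (fun t => 16 * (κ t) ^ ((3 : ℝ) / 2))
      (16 * (u * ((3 : ℝ) / 2) * k ^ ((3 : ℝ) / 2 - 1))) s :=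
    (hκ'.rpow_const (Or.inl hkne)).const_mul 16
  have hgne : (16 : ℝ) * k ^ ((3 : ℝ) / 2) ≠ 0 := by
    have : (0:ℝ) < k ^ ((3:ℝ)/2) := Real.rpow_pos_of_pos hkpos _
    positivity
  have hE := hN.div hg hgne
  refine hE.deriv.trans ?_
  rw [div_eq_zero_iff]
  left
  -- rewrite everything in terms of w := k^(1/2)
  set w := k ^ ((1 : ℝ) / 2) with hwdef
  have hwpos : 0 < w := Real.rpow_pos_of_pos hkpos _
  have hwne : w ≠ 0 := hwpos.ne'
  have hw2 : w ^ 2 = k := by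
    rw [hwdef, ← Real.rpow_natCast (k ^ ((1:ℝ)/2)) 2, ← Real.rpow_mul hkpos.le]
    norm_num
  have h32 : k ^ ((3 : ℝ) / 2) = k * w := by
    rw [hwdef, show (3:ℝ)/2 = 1 + 1/2 by norm_num, Real.rpow_add hkpos, Real.rpow_one]
  have h12 : k ^ ((3 : ℝ) / 2 - 1) = w := by
    rw [hwdef]
    norm_num
  rw [hu2eq, h32, h12, show κ s = k from hkdef.symm, ← hw2]
  field_simp
  ring
end

section
/- Let (M², g) be an oriented Riemannian surface with local isothermal coordinates z = x + iy, g = λ²(dx² + dy²), and let T be a smooth symmetric (0,2)-tensor field on M with div T = 0. Set t = tr_g T and φ(z, z̄) = T(∂_z, ∂_z). Then φ is holomorphic (∂_{z̄} φ = 0) if and only if t is constant. -/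
/-! We work in global isothermal coordinates `(x,y)` on an oriented Riemannian surface,
with metric `g = λ²(dx² + dy²)`.  A symmetric `(0,2)`-tensor `T` is described by its
components `a = T(∂x,∂x)`, `b = T(∂x,∂y) = T(∂y,∂x)`, `c = T(∂y,∂y)`. -/

/-- Partial derivative in the `x`-direction. -/
noncomputable def pdx (f : ℝ × ℝ → ℝ) (p : ℝ × ℝ) : ℝ :=
  deriv (fun x => f (x, p.2)) p.1

/-- Partial derivative in the `y`-direction. -/
noncomputable def pdy (f : ℝ × ℝ → ℝ) (p : ℝ × ℝ) : ℝ :=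
  deriv (fun y => f (p.1, y)) p.2

/-- Partial derivative in the `x`-direction of a complex-valued function. -/
noncomputable def pdxC (f : ℝ × ℝ → ℂ) (p : ℝ × ℝ) : ℂ :=
  deriv (fun x => f (x, p.2)) p.1

/-- Partial derivative in the `y`-direction of a complex-valued function. -/
noncomputable def pdyC (f : ℝ × ℝ → ℂ) (p : ℝ × ℝ) : ℂ :=
  deriv (fun y => f (p.1, y)) p.2

/-- `∂_{z̄} f = (∂_x f + i ∂_y f)/2`. -/
noncomputable def dzbar (f : ℝ × ℝ → ℂ) (p : ℝ × ℝ) : ℂ :=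
  (pdxC f p + Complex.I * pdyC f p) / 2

/-- `T(∂_z,∂_z) = (a − c − 2ib)/4` for the complex-bilinear extension of `T`,
where `∂_z = (∂_x − i ∂_y)/2`. -/
noncomputable def Tzz (a b c : ℝ × ℝ → ℝ) (p : ℝ × ℝ) : ℂ :=
  (((a p - c p : ℝ) : ℂ) - 2 * (b p : ℝ) * Complex.I) / 4

/-- The metric trace `t = tr_g T = λ^{−2}(T(∂x,∂x) + T(∂y,∂y))`. -/
noncomputable def trT (lam a c : ℝ × ℝ → ℝ) (p : ℝ × ℝ) : ℝ :=
  (a p + c p) / (lam p) ^ 2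

lemma sliceX_diff {f : ℝ × ℝ → ℝ} (hf : ContDiff ℝ (⊤ : ℕ∞) f) (y : ℝ) :
    Differentiable ℝ (fun x => f (x, y)) :=
  (hf.differentiable (by simp)).comp (differentiable_id.prodMk (differentiable_const _))

lemma sliceY_diff {f : ℝ × ℝ → ℝ} (hf : ContDiff ℝ (⊤ : ℕ∞) f) (x : ℝ) :
    Differentiable ℝ (fun y => f (x, y)) :=
  (hf.differentiable (by simp)).comp ((differentiable_const _).prodMk differentiable_id)

lemma hasDerivAt_pdx {f : ℝ × ℝ → ℝ} (hf : ContDiff ℝ (⊤ : ℕ∞) f) (p : ℝ × ℝ) :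
    HasDerivAt (fun x => f (x, p.2)) (pdx f p) p.1 :=
  (sliceX_diff hf p.2 p.1).hasDerivAt

lemma hasDerivAt_pdy {f : ℝ × ℝ → ℝ} (hf : ContDiff ℝ (⊤ : ℕ∞) f) (p : ℝ × ℝ) :
    HasDerivAt (fun y => f (p.1, y)) (pdy f p) p.2 :=
  (sliceY_diff hf p.1 p.2).hasDerivAt

/-- **(Proposition 2.)** Let `T` be a smooth symmetric `(0,2)`-tensor field on an oriented
Riemannian surface with isothermal metric `g = λ²(dx²+dy²)`, and suppose `div T = 0`
(expressed in coordinates via the Levi-Civita connection of `g`).  Then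
`φ = T(∂_z,∂_z)` is holomorphic (`∂_{z̄} φ = 0`) if and only if `t = tr_g T` is constant. -/
theorem divfree_tensor_holomorphic_iff_trace_const (lam a b c : ℝ × ℝ → ℝ)
    (hlam : ContDiff ℝ (⊤ : ℕ∞) lam) (ha : ContDiff ℝ (⊤ : ℕ∞) a) (hb : ContDiff ℝ (⊤ : ℕ∞) b)
    (hc : ContDiff ℝ (⊤ : ℕ∞) c) (hlampos : ∀ p, 0 < lam p)
    -- `div T = 0`: `λ²(div T)(∂x) = a_x + b_y − (λ_x/λ)(a+c) = 0` and
    -- `λ²(div T)(∂y) = b_x + c_y − (λ_y/λ)(a+c) = 0`.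
    (hdiv1 : ∀ p, pdx a p + pdy b p - (pdx lam p / lam p) * (a p + c p) = 0)
    (hdiv2 : ∀ p, pdx b p + pdy c p - (pdy lam p / lam p) * (a p + c p) = 0) :
    (∀ p, dzbar (Tzz a b c) p = 0) ↔ ∃ k : ℝ, ∀ p, trT lam a c p = k := by
  have hlne : ∀ p, lam p ≠ 0 := fun p => (hlampos p).ne'
  -- key pointwise equivalence
  have key : ∀ p, dzbar (Tzz a b c) p = 0 ↔
      pdx (trT lam a c) p = 0 ∧ pdy (trT lam a c) p = 0 := by
    intro p
    have hax := hasDerivAt_pdx ha p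
    have hbx := hasDerivAt_pdx hb p
    have hcx := hasDerivAt_pdx hc p
    have hlx := hasDerivAt_pdx hlam p
    have hay := hasDerivAt_pdy ha p
    have hby := hasDerivAt_pdy hb p
    have hcy := hasDerivAt_pdy hc p
    have hly := hasDerivAt_pdy hlam p
    have hne2 : (lam p) ^ 2 ≠ 0 := pow_ne_zero 2 (hlne p)
    -- x-derivative of Tzz
    have hTx : HasDerivAt (fun x => Tzz a b c (x, p.2))
        ((((pdx a p - pdx c p : ℝ) : ℂ) - 2 * ((pdx b p : ℝ) : ℂ) * Complex.I) / 4) p.1 :=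
      (((hax.sub hcx).ofReal_comp).sub
        ((hbx.ofReal_comp.const_mul (2 : ℂ)).mul_const Complex.I)).div_const 4
    have hTy : HasDerivAt (fun y => Tzz a b c (p.1, y))
        ((((pdy a p - pdy c p : ℝ) : ℂ) - 2 * ((pdy b p : ℝ) : ℂ) * Complex.I) / 4) p.2 :=
      (((hay.sub hcy).ofReal_comp).sub
        ((hby.ofReal_comp.const_mul (2 : ℂ)).mul_const Complex.I)).div_const 4
    have e1 : pdxC (Tzz a b c) p
        = (((pdx a p - pdx c p : ℝ) : ℂ) - 2 * ((pdx b p : ℝ) : ℂ) * Complex.I) / 4 :=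
      hTx.deriv
    have e2 : pdyC (Tzz a b c) p
        = (((pdy a p - pdy c p : ℝ) : ℂ) - 2 * ((pdy b p : ℝ) : ℂ) * Complex.I) / 4 :=
      hTy.deriv
    -- derivatives of the trace
    have Hx := ((hax.add hcx).div (hlx.pow 2) hne2)
    have Hy := ((hay.add hcy).div (hly.pow 2) hne2)
    have htx : pdx (trT lam a c) p
        = ((pdx a p + pdx c p) * lam p ^ 2
            - (a p + c p) * ((2 : ℕ) * lam p ^ 1 * pdx lam p)) / (lam p ^ 2) ^ 2 :=
      Hx.deriv
    have hty : pdy (trT lam a c) p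
        = ((pdy a p + pdy c p) * lam p ^ 2
            - (a p + c p) * ((2 : ℕ) * lam p ^ 1 * pdy lam p)) / (lam p ^ 2) ^ 2 :=
      Hy.deriv
    have h1 := hdiv1 p
    have h2 := hdiv2 p
    have htx' : pdx (trT lam a c) p
        = -(pdx a p - pdx c p + 2 * pdy b p) / lam p ^ 2 := by
      have hl := hlne p
      have h1' : pdx lam p * (a p + c p) = (pdx a p + pdy b p) * lam p := by
        field_simp at h1; linarith
      rw [htx, neg_div, eq_neg_iff_add_eq_zero, div_add_div _ _ (pow_ne_zero 2 hne2) hne2,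
        div_eq_zero_iff]
      left
      push_cast
      linear_combination (-(2 : ℝ) * lam p ^ 3) * h1'
    have hty' : pdy (trT lam a c) p
        = (pdy a p - pdy c p - 2 * pdx b p) / lam p ^ 2 := by
      have hl := hlne p
      have h2' : pdy lam p * (a p + c p) = (pdx b p + pdy c p) * lam p := by
        field_simp at h2; linarith
      rw [hty, div_eq_div_iff (pow_ne_zero 2 (pow_ne_zero 2 (hlne p))) hne2]
      push_cast
      linear_combination (-(2 : ℝ) * lam p ^ 3) * h2'
    have hz : dzbar (Tzz a b c) p
        = (((pdx a p - pdx c p + 2 * pdy b p : ℝ) : ℂ)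
            + ((pdy a p - pdy c p - 2 * pdx b p : ℝ) : ℂ) * Complex.I) / 8 := by
      rw [dzbar, e1, e2]
      push_cast
      simp only [Complex.ext_iff]
      constructor <;> simp <;> ring
    rw [hz, htx', hty']
    constructor
    · intro h
      have h' : ((pdx a p - pdx c p + 2 * pdy b p : ℝ) : ℂ)
          + ((pdy a p - pdy c p - 2 * pdx b p : ℝ) : ℂ) * Complex.I = 0 := by
        rw [div_eq_zero_iff] at h; exact h.resolve_right (by norm_num)
      have hre := congrArg Complex.re h'
      have him := congrArg Complex.im h'
      simp at hre him
      constructor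
      · rw [div_eq_zero_iff]; left; rw [neg_eq_zero]; linarith
      · rw [div_eq_zero_iff]; left; linarith
    · rintro ⟨hx0, hy0⟩
      rw [div_eq_zero_iff] at hx0 hy0
      have hx1 : pdx a p - pdx c p + 2 * pdy b p = 0 := by
        rcases hx0 with h | h
        · linarith [neg_eq_zero.mp h]
        · exact absurd h hne2
      have hy1 : pdy a p - pdy c p - 2 * pdx b p = 0 := by
        rcases hy0 with h | h
        · exact h
        · exact absurd h hne2
      rw [hx1, hy1]
      simp
  constructor
  · intro h
    refine ⟨trT lam a c (0, 0), fun p => ?_⟩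
    have hdx : ∀ q : ℝ × ℝ, pdx (trT lam a c) q = 0 := fun q => ((key q).1 (h q)).1
    have hdy : ∀ q : ℝ × ℝ, pdy (trT lam a c) q = 0 := fun q => ((key q).1 (h q)).2
    have htdiff : ContDiff ℝ (⊤ : ℕ∞) (trT lam a c) := by
      unfold trT
      exact (ha.add hc).div (hlam.pow 2) (fun q => pow_ne_zero 2 (hlne q))
    have step1 : trT lam a c p = trT lam a c (0, p.2) := by
      have hdiffx : Differentiable ℝ (fun x => trT lam a c (x, p.2)) :=
        sliceX_diff htdiff p.2
      have hzero : ∀ x : ℝ, deriv (fun x => trT lam a c (x, p.2)) x = 0 :=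
        fun x => hdx (x, p.2)
      have := is_const_of_deriv_eq_zero hdiffx hzero p.1 0
      simpa using this
    have step2 : trT lam a c (0, p.2) = trT lam a c (0, 0) := by
      have hdiffy : Differentiable ℝ (fun y => trT lam a c (0, y)) :=
        sliceY_diff htdiff 0
      have hzero : ∀ y : ℝ, deriv (fun y => trT lam a c (0, y)) y = 0 :=
        fun y => hdy (0, y)
      exact is_const_of_deriv_eq_zero hdiffy hzero p.2 0
    rw [step1, step2]
  · rintro ⟨k, hk⟩ p
    have hconst : trT lam a c = fun _ => k := funext hk
    have hx0 : pdx (trT lam a c) p = 0 := by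
      rw [hconst]; unfold pdx; simp
    have hy0 : pdy (trT lam a c) p = 0 := by
      rw [hconst]; unfold pdy; simp
    exact (key p).2 ⟨hx0, hy0⟩
end

section
/- Let φ : M² → Nⁿ be a biconservative surface (div S₂ = 0) in a Riemannian manifold, where S₂(X,Y) = −2|H|²⟨X,Y⟩ + 4⟨A_H X, Y⟩. Then the generalized Hopf function Q(z,z̄) = ⟨A_H ∂_z, ∂_z⟩ is holomorphic if and only if |H| is constant. -/
/-- The components of the stress-bienergy tensor `S₂ = −2|H|² g + 4⟨A_H ·,·⟩`. -/
noncomputable def S11 (lam α normH : ℝ × ℝ → ℝ) (p : ℝ × ℝ) : ℝ :=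
  -2 * (normH p) ^ 2 * (lam p) ^ 2 + 4 * α p

noncomputable def S12 (β : ℝ × ℝ → ℝ) (p : ℝ × ℝ) : ℝ := 4 * β p

noncomputable def S22 (lam γ normH : ℝ × ℝ → ℝ) (p : ℝ × ℝ) : ℝ :=
  -2 * (normH p) ^ 2 * (lam p) ^ 2 + 4 * γ p

lemma hasDerivAt_pdx_aux (f : ℝ × ℝ → ℝ) (hf : ContDiff ℝ (⊤ : ℕ∞) f) (p : ℝ × ℝ) :
    HasDerivAt (fun x => f (x, p.2)) (pdx f p) p.1 := by
  have hd : DifferentiableAt ℝ (fun x => f (x, p.2)) p.1 :=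
    ((hf.differentiable (by simp)) _).comp p.1
      (differentiableAt_id.prodMk (differentiableAt_const _))
  exact hd.hasDerivAt

lemma hasDerivAt_pdy_aux (f : ℝ × ℝ → ℝ) (hf : ContDiff ℝ (⊤ : ℕ∞) f) (p : ℝ × ℝ) :
    HasDerivAt (fun y => f (p.1, y)) (pdy f p) p.2 := by
  have hd : DifferentiableAt ℝ (fun y => f (p.1, y)) p.2 :=
    ((hf.differentiable (by simp)) _).comp p.2
      ((differentiableAt_const _).prodMk differentiableAt_id)
  exact hd.hasDerivAt

/-- For a biconservative surface (`div S₂ = 0`), the generalized Hopf function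
`Q(z,z̄) = ⟨A_H ∂_z,∂_z⟩` is holomorphic if and only if `|H|` is constant. -/
theorem biconservative_Q_holomorphic_iff_CMC (lam α β γ normH : ℝ × ℝ → ℝ)
    (hlam : ContDiff ℝ (⊤ : ℕ∞) lam) (hα : ContDiff ℝ (⊤ : ℕ∞) α) (hβ : ContDiff ℝ (⊤ : ℕ∞) β)
    (hγ : ContDiff ℝ (⊤ : ℕ∞) γ) (hnormH : ContDiff ℝ (⊤ : ℕ∞) normH)
    (hlampos : ∀ p, 0 < lam p) (hHnonneg : ∀ p, 0 ≤ normH p)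
    -- `tr A_H = 2|H|²`:
    (htr : ∀ p, (α p + γ p) / (lam p) ^ 2 = 2 * (normH p) ^ 2)
    -- biconservativity: `div S₂ = 0` in the isothermal coordinates:
    (hdiv1 : ∀ p, pdx (S11 lam α normH) p + pdy (S12 β) p
        - (pdx lam p / lam p) * (S11 lam α normH p + S22 lam γ normH p) = 0)
    (hdiv2 : ∀ p, pdx (S12 β) p + pdy (S22 lam γ normH) p
        - (pdy lam p / lam p) * (S11 lam α normH p + S22 lam γ normH p) = 0) :
    (∀ p, dzbar (Tzz α β γ) p = 0) ↔ ∃ k : ℝ, ∀ p, normH p = k := by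
  have hγeq : γ = fun q => 2 * normH q ^ 2 * lam q ^ 2 - α q := by
    funext q
    have h := htr q
    have hl : (lam q) ^ 2 ≠ 0 := pow_ne_zero _ (hlampos q).ne'
    rw [div_eq_iff hl] at h
    linarith
  subst hγeq
  -- the key pointwise identity
  have key : ∀ p, dzbar (Tzz α β (fun q => 2 * normH q ^ 2 * lam q ^ 2 - α q)) p
      = ((lam p : ℂ) ^ 2 * (normH p : ℂ) / 4) *
          (-(pdx normH p : ℂ) + Complex.I * (pdy normH p : ℂ)) := by
    intro p
    have Hnx := hasDerivAt_pdx_aux normH hnormH p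
    have Hny := hasDerivAt_pdy_aux normH hnormH p
    have Hlx := hasDerivAt_pdx_aux lam hlam p
    have Hly := hasDerivAt_pdy_aux lam hlam p
    have Hax := hasDerivAt_pdx_aux α hα p
    have Hay := hasDerivAt_pdy_aux α hα p
    have Hbx := hasDerivAt_pdx_aux β hβ p
    have Hby := hasDerivAt_pdy_aux β hβ p
    have hl : lam p ≠ 0 := (hlampos p).ne'
    -- derivatives of the tensor components
    have eS11x : pdx (S11 lam α normH) p = -4 * normH p * pdx normH p * lam p ^ 2
        - 4 * normH p ^ 2 * lam p * pdx lam p + 4 * pdx α p := by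
      have h' : HasDerivAt (fun x => S11 lam α normH (x, p.2))
          (-4 * normH p * pdx normH p * lam p ^ 2
            - 4 * normH p ^ 2 * lam p * pdx lam p + 4 * pdx α p) p.1 := by
        have h := (((Hnx.fun_pow 2).const_mul (-2:ℝ)).fun_mul (Hlx.fun_pow 2)).fun_add (Hax.const_mul (4:ℝ))
        refine h.congr_deriv ?_
        push_cast
        ring
      exact h'.deriv
    have eS12y : pdy (S12 β) p = 4 * pdy β p := by
      have h' : HasDerivAt (fun y => S12 β (p.1, y)) (4 * pdy β p) p.2 :=
        Hby.const_mul (4:ℝ)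
      exact h'.deriv
    have eS12x : pdx (S12 β) p = 4 * pdx β p := by
      have h' : HasDerivAt (fun x => S12 β (x, p.2)) (4 * pdx β p) p.1 :=
        Hbx.const_mul (4:ℝ)
      exact h'.deriv
    have eS22y : pdy (S22 lam (fun q => 2 * normH q ^ 2 * lam q ^ 2 - α q) normH) p
        = 12 * normH p * pdy normH p * lam p ^ 2
          + 12 * normH p ^ 2 * lam p * pdy lam p - 4 * pdy α p := by
      have h' : HasDerivAt
          (fun y => S22 lam (fun q => 2 * normH q ^ 2 * lam q ^ 2 - α q) normH (p.1, y))
          (12 * normH p * pdy normH p * lam p ^ 2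
            + 12 * normH p ^ 2 * lam p * pdy lam p - 4 * pdy α p) p.2 := by
        have h := (((Hny.fun_pow 2).const_mul (-2:ℝ)).fun_mul (Hly.fun_pow 2)).fun_add
          (((((Hny.fun_pow 2).const_mul (2:ℝ)).fun_mul (Hly.fun_pow 2)).fun_sub Hay).const_mul (4:ℝ))
        refine h.congr_deriv ?_
        push_cast
        ring
      exact h'.deriv
    -- divergence-free relations
    have r1 : 2 * pdx α p + 2 * pdy β p
        = 2 * normH p * pdx normH p * lam p ^ 2 + 4 * normH p ^ 2 * lam p * pdx lam p := by
      have R1 := hdiv1 p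
      rw [eS11x, eS12y] at R1
      simp only [S11, S22] at R1
      field_simp at R1
      refine mul_right_cancel₀ hl ?_
      linear_combination R1 / 2
    have r2 : 2 * pdx β p - 2 * pdy α p
        = -6 * normH p * pdy normH p * lam p ^ 2 - 4 * normH p ^ 2 * lam p * pdy lam p := by
      have R2 := hdiv2 p
      rw [eS12x, eS22y] at R2
      simp only [S11, S22] at R2
      field_simp at R2
      refine mul_right_cancel₀ hl ?_
      linear_combination R2 / 2
    -- complex derivatives of Q
    have ePx : pdxC (Tzz α β (fun q => 2 * normH q ^ 2 * lam q ^ 2 - α q)) p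
        = (((2 * pdx α p - 4 * normH p * pdx normH p * lam p ^ 2
            - 4 * normH p ^ 2 * lam p * pdx lam p : ℝ) : ℂ)
            - 2 * ((pdx β p : ℝ) : ℂ) * Complex.I) / 4 := by
      have h' : HasDerivAt
          (fun x => Tzz α β (fun q => 2 * normH q ^ 2 * lam q ^ 2 - α q) (x, p.2))
          ((((2 * pdx α p - 4 * normH p * pdx normH p * lam p ^ 2
            - 4 * normH p ^ 2 * lam p * pdx lam p : ℝ) : ℂ)
            - 2 * ((pdx β p : ℝ) : ℂ) * Complex.I) / 4) p.1 := by
        have h := (((Hax.fun_sub ((((Hnx.fun_pow 2).const_mul (2:ℝ)).fun_mul (Hlx.fun_pow 2)).fun_sub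
          Hax)).ofReal_comp.fun_sub
          ((Hbx.ofReal_comp.const_mul (2:ℂ)).mul_const Complex.I)).div_const (4:ℂ))
        refine h.congr_deriv ?_
        push_cast
        ring
      exact h'.deriv
    have ePy : pdyC (Tzz α β (fun q => 2 * normH q ^ 2 * lam q ^ 2 - α q)) p
        = (((2 * pdy α p - 4 * normH p * pdy normH p * lam p ^ 2
            - 4 * normH p ^ 2 * lam p * pdy lam p : ℝ) : ℂ)
            - 2 * ((pdy β p : ℝ) : ℂ) * Complex.I) / 4 := by
      have h' : HasDerivAt
          (fun y => Tzz α β (fun q => 2 * normH q ^ 2 * lam q ^ 2 - α q) (p.1, y))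
          ((((2 * pdy α p - 4 * normH p * pdy normH p * lam p ^ 2
            - 4 * normH p ^ 2 * lam p * pdy lam p : ℝ) : ℂ)
            - 2 * ((pdy β p : ℝ) : ℂ) * Complex.I) / 4) p.2 := by
        have h := (((Hay.fun_sub ((((Hny.fun_pow 2).const_mul (2:ℝ)).fun_mul (Hly.fun_pow 2)).fun_sub
          Hay)).ofReal_comp.fun_sub
          ((Hby.ofReal_comp.const_mul (2:ℂ)).mul_const Complex.I)).div_const (4:ℂ))
        refine h.congr_deriv ?_
        push_cast
        ring
      exact h'.deriv
    -- put it together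
    show (pdxC _ p + Complex.I * pdyC _ p) / 2 = _
    rw [ePx, ePy]
    have c1 : (2 : ℂ) * (pdx α p : ℂ) + 2 * (pdy β p : ℂ)
        = 2 * (normH p : ℂ) * (pdx normH p : ℂ) * (lam p : ℂ) ^ 2
            + 4 * (normH p : ℂ) ^ 2 * (lam p : ℂ) * (pdx lam p : ℂ) := by
      exact_mod_cast r1
    have c2 : (2 : ℂ) * (pdx β p : ℂ) - 2 * (pdy α p : ℂ)
        = -6 * (normH p : ℂ) * (pdy normH p : ℂ) * (lam p : ℂ) ^ 2
            - 4 * (normH p : ℂ) ^ 2 * (lam p : ℂ) * (pdy lam p : ℂ) := by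
      exact_mod_cast r2
    have hI : (Complex.I) ^ 2 = -1 := Complex.I_sq
    push_cast
    linear_combination c1 / 8 - Complex.I * c2 / 8 - ((pdy β p : ℂ) / 4) * hI
  constructor
  · intro h0
    -- partial derivatives of normH² vanish
    have hzero : ∀ p, normH p * pdx normH p = 0 ∧ normH p * pdy normH p = 0 := by
      intro p
      have hk := key p
      rw [h0 p] at hk
      have hl : ((lam p : ℂ) ^ 2 * (normH p : ℂ) / 4) *
          (-(pdx normH p : ℂ) + Complex.I * (pdy normH p : ℂ)) = 0 := hk.symm
      have hlne : (lam p : ℂ) ≠ 0 := by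
        exact_mod_cast (hlampos p).ne'
      rcases mul_eq_zero.mp hl with h | h
      · rcases mul_eq_zero.mp (by
          have := h
          rw [div_eq_zero_iff] at this
          rcases this with h' | h'
          · exact h'
          · norm_num at h') with h' | h'
        · exact absurd h' (pow_ne_zero _ hlne)
        · constructor <;> simp [Complex.ofReal_eq_zero.mp h']
      · have hre := congrArg Complex.re h
        have him := congrArg Complex.im h
        simp at hre him
        constructor <;> simp [hre, him]
    -- normH² is constant
    have h2diff : Differentiable ℝ (fun q : ℝ × ℝ => normH q ^ 2) :=
      (hnormH.differentiable (by simp)).pow 2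
    have hsq : ∀ p : ℝ × ℝ, normH p ^ 2 = normH (0, 0) ^ 2 := by
      have hx : ∀ y x : ℝ, normH (x, y) ^ 2 = normH (0, y) ^ 2 := by
        intro y x
        apply is_const_of_deriv_eq_zero
          (f := fun x : ℝ => normH (x, y) ^ 2)
        · exact h2diff.comp (differentiable_id.prodMk (differentiable_const _))
        · intro t
          have h := ((hasDerivAt_pdx_aux normH hnormH (t, y)).fun_pow 2).deriv
          rw [h]
          have := (hzero (t, y)).1
          push_cast
          nlinarith [this]
      have hy : ∀ y : ℝ, normH (0, y) ^ 2 = normH (0, 0) ^ 2 := by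
        intro y
        apply is_const_of_deriv_eq_zero
          (f := fun y : ℝ => normH (0, y) ^ 2)
        · exact h2diff.comp ((differentiable_const _).prodMk differentiable_id)
        · intro t
          have h := ((hasDerivAt_pdy_aux normH hnormH (0, t)).fun_pow 2).deriv
          rw [h]
          have := (hzero (0, t)).2
          push_cast
          nlinarith [this]
      intro p
      calc normH p ^ 2 = normH (p.1, p.2) ^ 2 := by rw [Prod.mk.eta]
        _ = normH (0, p.2) ^ 2 := hx p.2 p.1
        _ = normH (0, 0) ^ 2 := hy p.2
    refine ⟨normH (0, 0), fun p => ?_⟩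
    have hfac : (normH p - normH (0, 0)) * (normH p + normH (0, 0)) = 0 := by
      linear_combination hsq p
    rcases mul_eq_zero.mp hfac with h | h
    · linarith
    · have h1 := hHnonneg p
      have h2 := hHnonneg (0, 0)
      linarith
  · rintro ⟨k, hk⟩ p
    rw [key p]
    have hx : pdx normH p = 0 := by
      simp only [pdx, hk]
      simp
    have hy : pdy normH p = 0 := by
      simp only [pdy, hk]
      simp
    rw [hx, hy]
    simp
end
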